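/- Suppose Θ̂ ∈ P is an ε-approximate minimizer of the approximate objective, i.e. there is ε ≥ 0 with L̃(Θ̂|S) ≤ L̃(Θ|S) + ε for every Θ ∈ P. Assume label sparsity at rate s and recall rate r with FNR := (1−r)·s > 0 and TNR := (1−s) − B/K + r·s > 0, and η = FNR/(FNR+TNR). Then for every Θ ∈ P, L(Θ̂) ≤ L(Θ) + FNR·ln((FNR+TNR)/FNR) + TNR·ln((FNR+TNR)/TNR) + (B/K)·ε. (Sub-optimal-training extension of Theorem 1.) -/
import Mathlib


open Finset Real

/-- Sub-optimal-training extension of Theorem 1 (DECAF): if `Θhat` is an `ε`-approximate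
minimizer of the approximate objective, with label sparsity `s`, recall `r`,
`FNR = (1-r)*s > 0`, `TNR = (1-s) - B/K + r*s > 0`, and `η = FNR/(FNR+TNR)`, then for all `Θ`,
`L(Θhat) ≤ L(Θ) + FNR·ln((FNR+TNR)/FNR) + TNR·ln((FNR+TNR)/TNR) + (B/K)·ε`. -/
theorem decaf_thm1_suboptimal
    (N L B K : ℕ) (hN : 0 < N) (hL : 0 < L) (hB : 0 < B) (hK : 0 < K)
    (hBK : B ≤ K) (hdvd : K ∣ L * B) (hshort : 0 < L * B / K)
    (P : Type*) [Nonempty P]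
    (y : Fin N → Fin L → ℤ) (hy : ∀ i l, y i l = 1 ∨ y i l = -1)
    (S : Fin N → Finset (Fin L)) (hcard : ∀ i, (S i).card = L * B / K)
    (ℓ : P → Fin N → Fin L → ℝ) (hℓ : ∀ Θ i l, 0 ≤ ℓ Θ i l)
    (η : ℝ) (hη : η ∈ Set.Ioo (0 : ℝ) 1)
    (hdef : ∀ (Θ : P) (i : Fin N), ∀ l ∉ S i,
      (y i l = 1 → ℓ Θ i l = Real.log (1 / η)) ∧
      (y i l = -1 → ℓ Θ i l = Real.log (1 / (1 - η))))
    (s r : ℝ)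
    (hs : ∑ i : Fin N, ∑ l : Fin L, (if y i l = 1 then (1 : ℝ) else 0) = s * N * L)
    (hr : ∑ i : Fin N, ∑ l ∈ S i, (if y i l = 1 then (1 : ℝ) else 0) = r * s * N * L)
    (FNR TNR : ℝ) (hFNR : FNR = (1 - r) * s) (hTNR : TNR = (1 - s) - (B : ℝ) / K + r * s)
    (hFNRpos : 0 < FNR) (hTNRpos : 0 < TNR)
    (hηeq : η = FNR / (FNR + TNR))
    (Lfull : P → ℝ)
    (hLfull : ∀ Θ, Lfull Θ = (1 / ((N : ℝ) * L)) * ∑ i : Fin N, ∑ l : Fin L, ℓ Θ i l)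
    (Lapprox : P → ℝ)
    (hLapprox : ∀ Θ, Lapprox Θ = ((K : ℝ) / ((N : ℝ) * L * B)) * ∑ i : Fin N, ∑ l ∈ S i, ℓ Θ i l)
    (ε : ℝ) (hε : 0 ≤ ε)
    (Θhat : P) (hmin : ∀ Θ : P, Lapprox Θhat ≤ Lapprox Θ + ε) :
    ∀ Θ : P, Lfull Θhat ≤ Lfull Θ
      + FNR * Real.log ((FNR + TNR) / FNR) + TNR * Real.log ((FNR + TNR) / TNR)
      + ((B : ℝ) / K) * ε := by

  intro Θ
  have hNpos : (0:ℝ) < N := by exact_mod_cast hN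
  have hLpos : (0:ℝ) < L := by exact_mod_cast hL
  have hBpos : (0:ℝ) < B := by exact_mod_cast hB
  have hKpos : (0:ℝ) < K := by exact_mod_cast hK
  set c := Real.log (1/η) with hc
  set d := Real.log (1/(1-η)) with hd
  have hcardR : ((L * B / K : ℕ) : ℝ) = (L:ℝ) * B / K := by
    rw [Nat.cast_div hdvd (by exact_mod_cast hK.ne')]
    push_cast; ring
  have key : ∀ Θ' : P, Lfull Θ' = ((B:ℝ)/K) * Lapprox Θ' + (FNR * c + TNR * d) := by
    intro Θ'
    have hout : ∀ i : Fin N, ∑ l ∈ (S i)ᶜ, ℓ Θ' i l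
        = ∑ l ∈ (S i)ᶜ, ((if y i l = 1 then (1:ℝ) else 0) * c
            + (if y i l = 1 then (0:ℝ) else 1) * d) := by
      intro i
      refine Finset.sum_congr rfl fun l hl => ?_
      have hl' : l ∉ S i := Finset.mem_compl.mp hl
      rcases hy i l with h1 | h1
      · simp [h1, (hdef Θ' i l hl').1 h1]
      · have hne : y i l ≠ 1 := by rw [h1]; decide
        simp [hne, (hdef Θ' i l hl').2 h1]
    have hA : ∑ i : Fin N, ∑ l ∈ (S i)ᶜ, (if y i l = 1 then (1:ℝ) else 0)
        = FNR * ((N:ℝ) * L) := by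
      have h1 : ∀ i : Fin N, ∑ l ∈ (S i)ᶜ, (if y i l = 1 then (1:ℝ) else 0)
          = ∑ l : Fin L, (if y i l = 1 then (1:ℝ) else 0)
            - ∑ l ∈ S i, (if y i l = 1 then (1:ℝ) else 0) := by
        intro i
        rw [← Finset.sum_add_sum_compl (S i) (fun l => if y i l = 1 then (1:ℝ) else 0)]
        ring
      rw [Finset.sum_congr rfl fun i _ => h1 i, Finset.sum_sub_distrib, hs, hr, hFNR]
      ring
    have hcompl : ∀ i : Fin N, (((S i)ᶜ.card : ℝ)) = (L:ℝ) - (L:ℝ) * B / K := by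
      intro i
      rw [Finset.card_compl, hcard i]
      have hle : L * B / K ≤ L := Nat.div_le_of_le_mul (by nlinarith)
      rw [Nat.cast_sub (by simpa [Fintype.card_fin] using hle), hcardR, Fintype.card_fin]
    have hA' : ∑ i : Fin N, ∑ l ∈ (S i)ᶜ, (if y i l = 1 then (0:ℝ) else 1)
        = TNR * ((N:ℝ) * L) := by
      have h1 : ∀ i : Fin N, ∑ l ∈ (S i)ᶜ, (if y i l = 1 then (0:ℝ) else 1)
          = ((L:ℝ) - (L:ℝ) * B / K)
            - ∑ l ∈ (S i)ᶜ, (if y i l = 1 then (1:ℝ) else 0) := by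
        intro i
        have h2 : ∀ l : Fin L, (if y i l = 1 then (0:ℝ) else 1)
            = 1 - (if y i l = 1 then (1:ℝ) else 0) := by
          intro l; split <;> ring
        simp only [h2, Finset.sum_sub_distrib, Finset.sum_const, nsmul_eq_mul, mul_one,
          hcompl i]
      rw [Finset.sum_congr rfl fun i _ => h1 i, Finset.sum_sub_distrib, hA,
        Finset.sum_const, Finset.card_univ, Fintype.card_fin, nsmul_eq_mul,
        hTNR, hFNR]
      field_simp
      ring
    have hsplit : ∑ i : Fin N, ∑ l : Fin L, ℓ Θ' i l
        = ∑ i : Fin N, ∑ l ∈ S i, ℓ Θ' i l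
          + (FNR * ((N:ℝ) * L) * c + TNR * ((N:ℝ) * L) * d) := by
      have h1 : ∀ i : Fin N, ∑ l : Fin L, ℓ Θ' i l
          = ∑ l ∈ S i, ℓ Θ' i l + ∑ l ∈ (S i)ᶜ, ℓ Θ' i l :=
        fun i => (Finset.sum_add_sum_compl (S i) _).symm
      rw [Finset.sum_congr rfl fun i _ => h1 i, Finset.sum_add_distrib]
      congr 1
      rw [Finset.sum_congr rfl fun i _ => hout i]
      simp only [Finset.sum_add_distrib, ← Finset.sum_mul]
      rw [hA, hA']
    rw [hLfull, hLapprox, hsplit]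
    field_simp
  have h1 := key Θhat
  have h2 := key Θ
  have h3 := hmin Θ
  have hBKnn : (0:ℝ) ≤ (B:ℝ)/K := div_nonneg hBpos.le hKpos.le
  have hlog1 : 0 ≤ FNR * Real.log ((FNR+TNR)/FNR) := by
    apply mul_nonneg hFNRpos.le
    apply Real.log_nonneg
    rw [le_div_iff₀ hFNRpos]; linarith
  have hlog2 : 0 ≤ TNR * Real.log ((FNR+TNR)/TNR) := by
    apply mul_nonneg hTNRpos.le
    apply Real.log_nonneg
    rw [le_div_iff₀ hTNRpos]; linarith
  nlinarith [mul_le_mul_of_nonneg_left h3 hBKnn]
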